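/- Let p be a prime and let ℓ ≥ 1 and k ≥ 1 be integers. Then in ℤ[δ] one has the congruence [ℓ·p^k] ≡ [ℓ·p^{k−1}] · [p]^{p^{k−1}} · [ℓ]^{(p−1)·p^{k−1}} (mod p); equivalently, the images of the two sides in (ℤ/pℤ)[X] are equal. -/

import Mathlib

/-!
Writing `δ = t + t⁻¹`, one has `[n] = (tⁿ - t⁻ⁿ)/(t - t⁻¹)`, so `[m·n] = [m](Dₙ) · [n]` where
`Dₙ = dickson 1 1 n` satisfies `Dₙ(t + t⁻¹) = tⁿ + t⁻ⁿ`. Modulo `p` we have `D_{p^k} = X^{p^k}`, and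
composing with `X^{p^k}` is the `p^k`-th power by Frobenius, hence `[m·p^k] ≡ [m]^{p^k} · [p^k]`.
Applying this to `(ℓ, k)`, `(ℓ, k - 1)` and `(p, k - 1)` gives the congruence.
-/

open Polynomial

/-- The quantum number polynomials `[n] ∈ ℤ[δ]`, defined by `[0] = 0`, `[1] = 1`,
`[n+2] = δ·[n+1] − [n]`. -/
noncomputable def qn : ℕ → Polynomial ℤ
  | 0 => 0
  | 1 => 1
  | n + 2 => X * qn (n + 1) - qn n

lemma qn_add_two (n : ℕ) : qn (n + 2) = X * qn (n + 1) - qn n := rfl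

lemma qn_add_two_mul_add_qn (n m : ℕ) :
    qn (m + 2 * n) + qn m = dickson 1 (1 : ℤ) n * qn (m + n) := by
  induction n using Nat.twoStepInduction generalizing m with
  | zero => norm_num [dickson_zero]; ring
  | one => simp [qn_add_two]
  | more n ih ih' =>
    have h := ih (m + 2)
    rw [qn_add_two m] at h
    rw [dickson_add_two, C_1, show m + 2 * (n + 2) = m + 2 * n + 2 + 2 by ring, qn_add_two]
    linear_combination (norm := ring_nf) X * ih' (m + 1) - h

lemma qn_mul (m n : ℕ) : qn (m * n) = (qn m).comp (dickson 1 (1 : ℤ) n) * qn n := by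
  induction m using Nat.twoStepInduction with
  | zero => simp [qn]
  | one => simp [qn]
  | more m ih ih' =>
    have h := qn_add_two_mul_add_qn n (m * n)
    rw [show m * n + n = (m + 1) * n by ring, ih, ih'] at h
    rw [show (m + 2) * n = m * n + 2 * n by ring, qn_add_two, sub_comp, mul_comp, X_comp]
    linear_combination h

lemma dickson_one_one_charP_pow (R : Type*) [CommRing R] (p : ℕ) [Fact p.Prime] [CharP R p]
    (k : ℕ) : dickson 1 (1 : R) (p ^ k) = X ^ p ^ k := by
  induction k with
  | zero => simp
  | succ k ih =>
    rw [pow_succ, dickson_one_one_mul, ih, dickson_one_one_charP, X_pow_comp, ← pow_mul, mul_comm]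

lemma ZMod.expand_prime_pow (p : ℕ) [Fact p.Prime] (k : ℕ) (f : (ZMod p)[X]) :
    expand (ZMod p) (p ^ k) f = f ^ p ^ k := by
  induction k with
  | zero => simp
  | succ k ih => rw [pow_succ', expand_mul, ih, ZMod.expand_card, ← pow_mul, mul_comm]

lemma map_qn_mul_prime_pow (p : ℕ) [Fact p.Prime] (m k : ℕ) :
    (qn (m * p ^ k)).map (Int.castRingHom (ZMod p)) =
      (qn m).map (Int.castRingHom (ZMod p)) ^ p ^ k *
        (qn (p ^ k)).map (Int.castRingHom (ZMod p)) := by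
  rw [qn_mul, Polynomial.map_mul, map_comp, map_dickson, map_one, dickson_one_one_charP_pow,
    ← expand_eq_comp_X_pow, ZMod.expand_prime_pow]

theorem qn_mul_prime_pow_mod_general (p : ℕ) (hp : p.Prime) (ℓ k : ℕ) (hk : 1 ≤ k) :
    (qn (ℓ * p ^ k)).map (Int.castRingHom (ZMod p)) =
      (qn (ℓ * p ^ (k - 1)) * (qn p) ^ (p ^ (k - 1)) *
        (qn ℓ) ^ ((p - 1) * p ^ (k - 1))).map (Int.castRingHom (ZMod p)) := by
  have : Fact p.Prime := ⟨hp⟩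
  obtain ⟨j, rfl⟩ := Nat.exists_eq_add_of_le' hk
  have hp_pow : p ^ (j + 1) = p * p ^ j := pow_succ' p j
  have hexp : p ^ j + (p - 1) * p ^ j = p ^ (j + 1) := by
    rw [hp_pow, ← one_add_mul, Nat.add_sub_cancel' hp.one_le]
  simp only [Nat.add_sub_cancel, Polynomial.map_mul, Polynomial.map_pow, map_qn_mul_prime_pow]
  rw [hp_pow, map_qn_mul_prime_pow, ← hp_pow, ← hexp]
  ring

/-- For a prime `p` and integers `ℓ, k ≥ 1`,
`[ℓ·p^k] ≡ [ℓ·p^(k−1)] · [p]^(p^(k−1)) · [ℓ]^((p−1)·p^(k−1)) (mod p)` in `ℤ[δ]`. -/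
theorem qn_mul_prime_pow_mod (p : ℕ) (hp : p.Prime) (ℓ k : ℕ) (hℓ : 1 ≤ ℓ) (hk : 1 ≤ k) :
    (qn (ℓ * p ^ k)).map (Int.castRingHom (ZMod p)) =
      (qn (ℓ * p ^ (k - 1)) * (qn p) ^ (p ^ (k - 1)) *
        (qn ℓ) ^ ((p - 1) * p ^ (k - 1))).map (Int.castRingHom (ZMod p)) :=
  qn_mul_prime_pow_mod_general p hp ℓ k hk
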